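/- arXiv:2305.04164 — 2 statements merged into one kernel-verified Lean document; each statement's English description precedes it below -/
import Mathlib

section
/- In B_{m,n}(q,t), for all integers i, k with 1 ≤ i ≤ k ≤ min{m,n}, one has e_k e_i = e_i e_k = ((t − t⁻¹)/(q − q⁻¹))^i · e_k. In particular e_k² = ((t − t⁻¹)/(q − q⁻¹))^k · e_k. -/
open scoped Classical

noncomputable section

/-- The field `ℚ(q,t)` of rational functions in two indeterminates over `ℚ`. -/
abbrev KK : Type := FractionRing (MvPolynomial (Fin 2) ℚ)

/-- The indeterminate `q` viewed inside `ℚ(q,t)`. -/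
def qv : KK := algebraMap (MvPolynomial (Fin 2) ℚ) KK (MvPolynomial.X 0)

/-- The indeterminate `t` viewed inside `ℚ(q,t)`. -/
def tv : KK := algebraMap (MvPolynomial (Fin 2) ℚ) KK (MvPolynomial.X 1)

/-- The valid indices `i` for the generators `H i` of `B_{m,n}(q,t)`:
`1 ≤ i ≤ n - 1` or `1 ≤ -i ≤ m - 1`. -/
def validIdx (m n : ℕ) (i : ℤ) : Prop :=
  (1 ≤ i ∧ i ≤ (n : ℤ) - 1) ∨ (1 ≤ -i ∧ -i ≤ (m : ℤ) - 1)

/-- Generators of the quantized walled Brauer algebra `B_{m,n}(q,t)`. -/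
inductive WBgen (m n : ℕ) : Type
  | H (i : ℤ) (h : validIdx m n i) : WBgen m n
  | E : WBgen m n

/-- The generator `H i` in the free algebra. -/
def fH (m n : ℕ) (i : ℤ) (h : validIdx m n i) : FreeAlgebra KK (WBgen m n) :=
  FreeAlgebra.ι KK (WBgen.H i h)

/-- The generator `e` in the free algebra. -/
def fE (m n : ℕ) : FreeAlgebra KK (WBgen m n) := FreeAlgebra.ι KK WBgen.E

/-- The element `H i - (q - q⁻¹)`, which becomes the inverse of `H i` in the quotient. -/
def fHinv (m n : ℕ) (i : ℤ) (h : validIdx m n i) : FreeAlgebra KK (WBgen m n) :=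
  fH m n i h - algebraMap KK _ (qv - qv⁻¹)

/-- The defining relations of the quantized walled Brauer algebra `B_{m,n}(q,t)`. -/
inductive WBrel (m n : ℕ) :
    FreeAlgebra KK (WBgen m n) → FreeAlgebra KK (WBgen m n) → Prop
  | quad (i : ℤ) (h : validIdx m n i) :
      WBrel m n ((fH m n i h - algebraMap KK _ qv) * (fH m n i h + algebraMap KK _ qv⁻¹)) 0
  | comm (i : ℤ) (hi : validIdx m n i) (j : ℤ) (hj : validIdx m n j) (hij : 1 < |i - j|) :
      WBrel m n (fH m n i hi * fH m n j hj) (fH m n j hj * fH m n i hi)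
  | braid (i : ℤ) (hi : validIdx m n i) (hi1 : validIdx m n (i + 1)) :
      WBrel m n (fH m n i hi * fH m n (i + 1) hi1 * fH m n i hi)
        (fH m n (i + 1) hi1 * fH m n i hi * fH m n (i + 1) hi1)
  | commE (i : ℤ) (hi : validIdx m n i) (h2 : 2 ≤ |i|) :
      WBrel m n (fH m n i hi * fE m n) (fE m n * fH m n i hi)
  | eHe (i : ℤ) (hi : validIdx m n i) (h : i = 1 ∨ i = -1) :
      WBrel m n (fE m n * fH m n i hi * fE m n) (algebraMap KK _ tv * fE m n)
  | esq : WBrel m n (fE m n * fE m n)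
      (algebraMap KK _ ((tv - tv⁻¹) / (qv - qv⁻¹)) * fE m n)
  | rel7 (h1 : validIdx m n 1) (hm : validIdx m n (-1)) :
      WBrel m n (fE m n * fHinv m n (-1) hm * fH m n 1 h1 * fE m n * fH m n (-1) hm)
        (fE m n * fHinv m n (-1) hm * fH m n 1 h1 * fE m n * fH m n 1 h1)
  | rel8 (h1 : validIdx m n 1) (hm : validIdx m n (-1)) :
      WBrel m n (fH m n (-1) hm * fE m n * fHinv m n (-1) hm * fH m n 1 h1 * fE m n)
        (fH m n 1 h1 * fE m n * fHinv m n (-1) hm * fH m n 1 h1 * fE m n)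

/-- The quantized walled Brauer algebra `B_{m,n}(q,t)`. -/
abbrev WB (m n : ℕ) : Type := RingQuot (WBrel m n)

/-- The generator `H i` of `B_{m,n}(q,t)`. -/
def HB (m n : ℕ) (i : ℤ) (h : validIdx m n i) : WB m n :=
  RingQuot.mkAlgHom KK (WBrel m n) (fH m n i h)

/-- The generator `e` of `B_{m,n}(q,t)`. -/
def EB (m n : ℕ) : WB m n := RingQuot.mkAlgHom KK (WBrel m n) (fE m n)

/-- The inverse `H i⁻¹ = H i - (q - q⁻¹)` of the generator `H i`. -/
def HBinv (m n : ℕ) (i : ℤ) (h : validIdx m n i) : WB m n :=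
  HB m n i h - algebraMap KK _ (qv - qv⁻¹)

/-- Total version of `H i` (equal to `H i` for valid `i`, junk value `1` otherwise). -/
def Htil (m n : ℕ) (i : ℤ) : WB m n :=
  if h : validIdx m n i then HB m n i h else 1

/-- Total version of `H i⁻¹` (equal to `H i⁻¹` for valid `i`, junk value `1` otherwise). -/
def Htilinv (m n : ℕ) (i : ℤ) : WB m n :=
  if h : validIdx m n i then HBinv m n i h else 1

/-- The elements `e_k`:  `e_0 = 1`, `e_1 = e`, and
`e_{k+1} = e ⬝ H_{-1}⁻¹ H_{-2}⁻¹ ⋯ H_{-k}⁻¹ ⬝ H_1 H_2 ⋯ H_k ⬝ e_k`. -/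
def ek (m n : ℕ) : ℕ → WB m n
  | 0 => 1
  | k + 1 =>
      EB m n *
        (((List.range k).map (fun j => Htilinv m n (-((j + 1 : ℕ) : ℤ)))).prod) *
        (((List.range k).map (fun j => Htil m n ((j + 1 : ℕ) : ℤ))).prod) *
        ek m n k

set_option synthInstance.maxHeartbeats 1000000
set_option maxHeartbeats 1000000

section Helpers
variable {R : Type*} [Ring R]

lemma quad_helper1 (H a b : R) (h0 : (H - a) * (H + b) = 0)
    (e1 : a * b = 1) (e3 : H * a = a * H) :
    H * (H - (a - b)) = 1 := by
  have key : H * (H - (a - b)) - 1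
      = (H - a) * (H + b) + (a * H - H * a) + (a * b - 1) := by noncomm_ring
  rw [h0, e1, e3] at key
  simp only [zero_add, sub_self, add_zero] at key
  exact sub_eq_zero.mp key

lemma quad_helper2 (H a b : R) (h0 : (H - a) * (H + b) = 0)
    (e1 : a * b = 1) (e2 : H * b = b * H) :
    (H - (a - b)) * H = 1 := by
  have key : (H - (a - b)) * H - 1
      = (H - a) * (H + b) + (b * H - H * b) + (a * b - 1) := by noncomm_ring
  rw [h0, e1, ← e2] at key
  simp only [zero_add, sub_self, add_zero] at key
  exact sub_eq_zero.mp key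

lemma comm_sub_helper (H c x : R) (h1 : H * x = x * H) (h2 : c * x = x * c) :
    (H - c) * x = x * (H - c) := by
  rw [sub_mul, mul_sub, h1, h2]

lemma assoc3 (a b c d : R) (h : a * b * c = d) (y : R) : a * (b * (c * y)) = d * y := by
  rw [← h]; noncomm_ring

lemma assoc2 (a b c : R) (h : a * b = c) (y : R) : a * (b * y) = c * y := by
  rw [← h]; noncomm_ring

lemma assoc2' (a b c d : R) (h : a * b = c * d) (y : R) : a * (b * y) = c * (d * y) := by
  rw [← mul_assoc, h, mul_assoc]

lemma assoc5 (a b c d e f : R) (h : a * b * c * d * e = f) (y : R) :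
    a * (b * (c * (d * (e * y)))) = f * y := by
  rw [← h]; noncomm_ring

lemma comm_pw (a b : R) (h : Commute a b) (y : R) : a * (b * y) = b * (a * y) := by
  rw [← mul_assoc, h.eq, mul_assoc]

end Helpers

namespace WBaux

variable {m n : ℕ}

lemma am_comm (c : KK) (x : WB m n) : x * algebraMap KK (WB m n) c = algebraMap KK (WB m n) c * x :=
  (Algebra.commutes c x).symm

lemma qv_ne : qv ≠ 0 := by
  have hinj : Function.Injective (algebraMap (MvPolynomial (Fin 2) ℚ) KK) :=
    IsFractionRing.injective _ _
  have hx : (MvPolynomial.X 0 : MvPolynomial (Fin 2) ℚ) ≠ 0 := MvPolynomial.X_ne_zero 0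
  simpa [qv, map_eq_zero_iff _ hinj] using hx

lemma qinv : qv * qv⁻¹ = 1 := mul_inv_cancel₀ qv_ne

lemma mk_rel {x y : FreeAlgebra KK (WBgen m n)} (h : WBrel m n x y) :
    RingQuot.mkAlgHom KK (WBrel m n) x = RingQuot.mkAlgHom KK (WBrel m n) y :=
  RingQuot.mkAlgHom_rel KK h

lemma HB_mul_HBinv (i : ℤ) (h : validIdx m n i) :
    HB m n i h * HBinv m n i h = 1 := by
  have h0 := mk_rel (WBrel.quad i h)
  simp only [map_mul, map_sub, map_add, map_zero, AlgHom.commutes] at h0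
  have h0' : (HB m n i h - algebraMap KK (WB m n) qv) *
      (HB m n i h + algebraMap KK (WB m n) qv⁻¹) = 0 := h0
  have e1 : algebraMap KK (WB m n) qv * algebraMap KK (WB m n) qv⁻¹ = 1 := by
    rw [← map_mul, qinv, map_one]
  have e3 : HB m n i h * algebraMap KK (WB m n) qv = algebraMap KK (WB m n) qv * HB m n i h :=
    am_comm qv (HB m n i h)
  have key := quad_helper1 (HB m n i h) (algebraMap KK (WB m n) qv)
    (algebraMap KK (WB m n) qv⁻¹) h0' e1 e3
  have e4 : algebraMap KK (WB m n) qv - algebraMap KK (WB m n) qv⁻¹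
      = algebraMap KK (WB m n) (qv - qv⁻¹) := (map_sub (algebraMap KK (WB m n)) qv qv⁻¹).symm
  unfold HBinv
  rw [← e4]
  exact key

lemma HBinv_mul_HB (i : ℤ) (h : validIdx m n i) :
    HBinv m n i h * HB m n i h = 1 := by
  have h0 := mk_rel (WBrel.quad i h)
  simp only [map_mul, map_sub, map_add, map_zero, AlgHom.commutes] at h0
  have h0' : (HB m n i h - algebraMap KK (WB m n) qv) *
      (HB m n i h + algebraMap KK (WB m n) qv⁻¹) = 0 := h0
  have e1 : algebraMap KK (WB m n) qv * algebraMap KK (WB m n) qv⁻¹ = 1 := by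
    rw [← map_mul, qinv, map_one]
  have e2 : HB m n i h * algebraMap KK (WB m n) qv⁻¹
      = algebraMap KK (WB m n) qv⁻¹ * HB m n i h := am_comm _ _
  have key := quad_helper2 (HB m n i h) (algebraMap KK (WB m n) qv)
    (algebraMap KK (WB m n) qv⁻¹) h0' e1 e2
  have e4 : algebraMap KK (WB m n) qv - algebraMap KK (WB m n) qv⁻¹
      = algebraMap KK (WB m n) (qv - qv⁻¹) := (map_sub (algebraMap KK (WB m n)) qv qv⁻¹).symm
  unfold HBinv
  rw [← e4]
  exact key

lemma Htil_mul_inv (i : ℤ) : Htil m n i * Htilinv m n i = 1 := by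
  unfold Htil Htilinv
  by_cases h : validIdx m n i
  · simp only [dif_pos h]; exact HB_mul_HBinv i h
  · simp only [dif_neg h]; exact one_mul 1

lemma Htilinv_mul (i : ℤ) : Htilinv m n i * Htil m n i = 1 := by
  unfold Htil Htilinv
  by_cases h : validIdx m n i
  · simp only [dif_pos h]; exact HBinv_mul_HB i h
  · simp only [dif_neg h]; exact one_mul 1

lemma Htil_comm {i j : ℤ} (hij : 1 < |i - j|) :
    Commute (Htil m n i) (Htil m n j) := by
  unfold Htil
  by_cases hi : validIdx m n i
  · by_cases hj : validIdx m n j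
    · simp only [dif_pos hi, dif_pos hj]
      show HB m n i hi * HB m n j hj = HB m n j hj * HB m n i hi
      unfold HB
      rw [← map_mul, ← map_mul]
      exact mk_rel (WBrel.comm i hi j hj hij)
    · simp only [dif_neg hj]
      exact Commute.one_right _
  · simp only [dif_neg hi]
    exact Commute.one_left _

lemma commute_inv_left {i : ℤ} {x : WB m n} (h : Commute (Htil m n i) x) :
    Commute (Htilinv m n i) x := by
  have h' : Htil m n i * x = x * Htil m n i := h
  have key : Htilinv m n i * x = x * Htilinv m n i := by
    by_cases hv : validIdx m n i
    · unfold Htilinv Htil at *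
      rw [dif_pos hv] at h' ⊢
      unfold HBinv
      exact comm_sub_helper (HB m n i hv) (algebraMap KK (WB m n) (qv - qv⁻¹)) x h'
        (Algebra.commutes (qv - qv⁻¹) x)
    · unfold Htilinv
      rw [dif_neg hv, one_mul, mul_one]
  exact key

lemma commute_E_Htil {i : ℤ} (h2 : 2 ≤ |i|) : Commute (EB m n) (Htil m n i) := by
  unfold Htil
  by_cases hv : validIdx m n i
  · simp only [dif_pos hv]
    have : HB m n i hv * EB m n = EB m n * HB m n i hv := by
      unfold HB EB
      rw [← map_mul, ← map_mul]
      exact mk_rel (WBrel.commE i hv h2)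
    exact (Commute.symm this)
  · simp only [dif_neg hv]
    exact Commute.one_right _

lemma commute_E_Htilinv {i : ℤ} (h2 : 2 ≤ |i|) : Commute (EB m n) (Htilinv m n i) :=
  (commute_inv_left (commute_E_Htil h2).symm).symm

lemma braid_Htil {i : ℤ} (hi : validIdx m n i) (hi1 : validIdx m n (i + 1)) :
    Htil m n i * Htil m n (i + 1) * Htil m n i
      = Htil m n (i + 1) * Htil m n i * Htil m n (i + 1) := by
  unfold Htil
  simp only [dif_pos hi, dif_pos hi1]
  unfold HB
  rw [← map_mul, ← map_mul, ← map_mul, ← map_mul]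
  exact mk_rel (WBrel.braid i hi hi1)

lemma esq_eq : EB m n * EB m n = algebraMap KK (WB m n) ((tv - tv⁻¹) / (qv - qv⁻¹)) * EB m n := by
  unfold EB
  rw [← map_mul]
  have := mk_rel (m := m) (n := n) WBrel.esq
  rw [this, map_mul, AlgHom.commutes]

lemma eHe_eq (h1 : validIdx m n 1) :
    EB m n * Htil m n 1 * EB m n = algebraMap KK (WB m n) tv * EB m n := by
  unfold Htil
  rw [dif_pos h1]
  unfold EB HB
  rw [← map_mul, ← map_mul]
  have := mk_rel (WBrel.eHe 1 h1 (Or.inl rfl))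
  rw [this, map_mul, AlgHom.commutes]

lemma mk_fHinv (hm' : validIdx m n (-1)) :
    RingQuot.mkAlgHom KK (WBrel m n) (fHinv m n (-1) hm') = Htilinv m n (-1) := by
  unfold fHinv Htilinv HBinv HB
  rw [dif_pos hm', map_sub, AlgHom.commutes]

lemma rel8_eq (h1 : validIdx m n 1) (hm' : validIdx m n (-1)) :
    Htil m n (-1) * EB m n * Htilinv m n (-1) * Htil m n 1 * EB m n
      = Htil m n 1 * EB m n * Htilinv m n (-1) * Htil m n 1 * EB m n := by
  have h0 := mk_rel (WBrel.rel8 h1 hm')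
  simp only [map_mul, mk_fHinv hm'] at h0
  unfold Htil
  simp only [dif_pos h1, dif_pos hm']
  exact h0


lemma habs1 {a : ℤ} (h : 2 ≤ a) : 2 ≤ |a| := le_trans h (le_abs_self a)
lemma habs2 {a : ℤ} (h : a ≤ -2) : 2 ≤ |a| := by rw [abs_of_nonpos (by omega)]; omega
lemma habs3 {a : ℤ} (h : 1 < a) : 1 < |a| := lt_of_lt_of_le h (le_abs_self a)
lemma habs4 {a : ℤ} (h : a < -1) : 1 < |a| := by rw [abs_of_nonpos (by omega)]; omega

/-- recursive versions of the products -/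
def Lq (m n : ℕ) : ℕ → WB m n
  | 0 => 1
  | k+1 => Lq m n k * Htilinv m n (-((k:ℤ)+1))

def Rq (m n : ℕ) : ℕ → WB m n
  | 0 => 1
  | k+1 => Rq m n k * Htil m n ((k:ℤ)+1)

def L2q (m n : ℕ) : ℕ → WB m n
  | 0 => 1
  | k+1 => L2q m n k * Htilinv m n (-((k:ℤ)+2))

def R2q (m n : ℕ) : ℕ → WB m n
  | 0 => 1
  | k+1 => R2q m n k * Htil m n ((k:ℤ)+2)

lemma Lq_eq (k : ℕ) :
    ((List.range k).map (fun j => Htilinv m n (-((j + 1 : ℕ) : ℤ)))).prod = Lq m n k := by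
  induction k with
  | zero => rfl
  | succ k ih =>
    rw [List.range_succ, List.map_append, List.prod_append, ih, List.map_singleton,
      List.prod_singleton, Lq]
    have hc : -((k + 1 : ℕ) : ℤ) = -((k:ℤ)+1) := by push_cast; ring
    rw [hc]

lemma Rq_eq (k : ℕ) :
    ((List.range k).map (fun j => Htil m n ((j + 1 : ℕ) : ℤ))).prod = Rq m n k := by
  induction k with
  | zero => rfl
  | succ k ih =>
    rw [List.range_succ, List.map_append, List.prod_append, ih, List.map_singleton,
      List.prod_singleton, Rq]
    have hc : ((k + 1 : ℕ) : ℤ) = (k:ℤ)+1 := by push_cast; ring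
    rw [hc]

lemma ek_succ (k : ℕ) : ek m n (k+1) = EB m n * Lq m n k * Rq m n k * ek m n k := by
  rw [ek, Lq_eq, Rq_eq]

/-- validity -/
lemma valid_pos {s : ℕ} (h1 : 1 ≤ s) (h2 : s + 1 ≤ n) : validIdx m n (s:ℤ) :=
  Or.inl ⟨by omega, by omega⟩

lemma valid_neg {s : ℕ} (h1 : 1 ≤ s) (h2 : s + 1 ≤ m) : validIdx m n (-(s:ℤ)) :=
  Or.inr ⟨by omega, by omega⟩

/-- commute builders -/
lemma commute_Lq {x : WB m n} (k : ℕ)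
    (h : ∀ j : ℕ, j < k → Commute x (Htilinv m n (-((j:ℤ)+1)))) :
    Commute x (Lq m n k) := by
  induction k with
  | zero => exact Commute.one_right x
  | succ k ih =>
    show Commute x (Lq m n k * Htilinv m n (-((k:ℤ)+1)))
    exact Commute.mul_right (ih fun j hj => h j (by omega)) (h k (by omega))

lemma commute_Rq {x : WB m n} (k : ℕ)
    (h : ∀ j : ℕ, j < k → Commute x (Htil m n ((j:ℤ)+1))) :
    Commute x (Rq m n k) := by
  induction k with
  | zero => exact Commute.one_right x
  | succ k ih =>
    show Commute x (Rq m n k * Htil m n ((k:ℤ)+1))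
    exact Commute.mul_right (ih fun j hj => h j (by omega)) (h k (by omega))

lemma commute_L2q {x : WB m n} (k : ℕ)
    (h : ∀ j : ℕ, j < k → Commute x (Htilinv m n (-((j:ℤ)+2)))) :
    Commute x (L2q m n k) := by
  induction k with
  | zero => exact Commute.one_right x
  | succ k ih =>
    show Commute x (L2q m n k * Htilinv m n (-((k:ℤ)+2)))
    exact Commute.mul_right (ih fun j hj => h j (by omega)) (h k (by omega))

lemma commute_R2q {x : WB m n} (k : ℕ)
    (h : ∀ j : ℕ, j < k → Commute x (Htil m n ((j:ℤ)+2))) :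
    Commute x (R2q m n k) := by
  induction k with
  | zero => exact Commute.one_right x
  | succ k ih =>
    show Commute x (R2q m n k * Htil m n ((k:ℤ)+2))
    exact Commute.mul_right (ih fun j hj => h j (by omega)) (h k (by omega))

/-- specific commutes -/
lemma cLq_pos {a : ℤ} (ha : 1 ≤ a) (k : ℕ) : Commute (Htil m n a) (Lq m n k) :=
  commute_Lq k fun j _ => (commute_inv_left (Htil_comm (habs4 (by omega)))).symm

lemma cRq_neg {a : ℤ} (ha : a ≤ -1) (k : ℕ) : Commute (Htil m n a) (Rq m n k) :=
  commute_Rq k fun j _ => Htil_comm (habs4 (by omega))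

lemma cRq_neg_inv {a : ℤ} (ha : a ≤ -1) (k : ℕ) : Commute (Htilinv m n a) (Rq m n k) :=
  commute_inv_left (cRq_neg ha k)

lemma cE_L2q (k : ℕ) : Commute (EB m n) (L2q m n k) :=
  commute_L2q k fun j _ => commute_E_Htilinv (habs2 (by omega))

lemma cE_R2q (k : ℕ) : Commute (EB m n) (R2q m n k) :=
  commute_R2q k fun j _ => commute_E_Htil (habs1 (by omega))

lemma cHtil_Rq_far {s : ℤ} (k : ℕ) (h : (k:ℤ) + 1 < s) : Commute (Htil m n s) (Rq m n k) :=
  commute_Rq k fun j _ => Htil_comm (habs3 (by omega))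

lemma cHtil_Lq_far {s : ℤ} (k : ℕ) (h : s < -((k:ℤ)+1)) : Commute (Htil m n s) (Lq m n k) :=
  commute_Lq k fun j _ => (commute_inv_left (Htil_comm (habs3 (by omega)))).symm

lemma cHtil1_L2q (k : ℕ) : Commute (Htil m n 1) (L2q m n k) :=
  commute_L2q k fun j _ => (commute_inv_left (Htil_comm (habs4 (by omega)))).symm

/-- pointwise rewriting helpers, stated in context -/
lemma Wassoc (a b c : WB m n) : a * b * c = a * (b * c) := mul_assoc a b c

lemma Wcomm_pw {a b : WB m n} (h : Commute a b) (y : WB m n) :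
    a * (b * y) = b * (a * y) := comm_pw a b h y

lemma Wpw2 {a b c d : WB m n} (h : a * b = c * d) (y : WB m n) :
    a * (b * y) = c * (d * y) := assoc2' a b c d h y

lemma Wpw2c {a b c : WB m n} (h : a * b = c) (y : WB m n) :
    a * (b * y) = c * y := assoc2 a b c h y

lemma Wpw3c {a b c d : WB m n} (h : a * b * c = d) (y : WB m n) :
    a * (b * (c * y)) = d * y := assoc3 a b c d h y

lemma Wcentral (c : KK) (x y : WB m n) :
    x * (algebraMap KK (WB m n) c * y) = algebraMap KK (WB m n) c * (x * y) :=
  by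
    have h : Commute x (algebraMap KK (WB m n) c) := by exact am_comm c x
    exact comm_pw x _ h y

/-- inverse braid identity -/
lemma ibraid_helper {R : Type*} [Monoid R] (A B A' B' : R) (hA : A * A' = 1) (hA' : A' * A = 1)
    (hB : B * B' = 1) (hB' : B' * B = 1) (hbr : A * B * A = B * A * B) :
    A * (B' * A') = B' * A' * B := by
  let u : Rˣ := ⟨A, A', hA, hA'⟩
  let v : Rˣ := ⟨B, B', hB, hB'⟩
  have hbru : u * v * u = v * u * v := Units.ext hbr
  have key : v⁻¹ * u⁻¹ * v = u * (v⁻¹ * u⁻¹) := by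
    calc v⁻¹ * u⁻¹ * v = v⁻¹ * u⁻¹ * (v * u * v) * (v⁻¹ * u⁻¹) := by group
      _ = v⁻¹ * u⁻¹ * (u * v * u) * (v⁻¹ * u⁻¹) := by rw [hbru]
      _ = u * (v⁻¹ * u⁻¹) := by group
  exact (congrArg Units.val key).symm

lemma ibraid {i : ℤ} (hi : validIdx m n i) (hi1 : validIdx m n (i+1)) :
    Htil m n i * (Htilinv m n (i+1) * Htilinv m n i)
      = Htilinv m n (i+1) * Htilinv m n i * Htil m n (i+1) :=
  ibraid_helper _ _ _ _ (Htil_mul_inv i) (Htilinv_mul i) (Htil_mul_inv (i+1))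
    (Htilinv_mul (i+1)) (braid_Htil hi hi1)

lemma Wpw_ib {a b c d : WB m n} (h : a * (b * c) = b * c * d) (y : WB m n) :
    a * (b * (c * y)) = b * (c * (d * y)) := by
  have h' : a * b * c = b * c * d := by rw [mul_assoc]; exact h
  calc a * (b * (c * y)) = a * b * c * y := by rw [mul_assoc, mul_assoc]
    _ = b * c * d * y := by rw [h']
    _ = b * (c * (d * y)) := by rw [mul_assoc, mul_assoc]

lemma Wpw5 {a b c d e a' b' c' d' e' : WB m n}
    (h : a * b * c * d * e = a' * b' * c' * d' * e') (y : WB m n) :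
    a * (b * (c * (d * (e * y)))) = a' * (b' * (c' * (d' * (e' * y)))) := by
  calc a * (b * (c * (d * (e * y)))) = a * b * c * d * e * y := by
        rw [mul_assoc, mul_assoc, mul_assoc, mul_assoc]
    _ = a' * b' * c' * d' * e' * y := by rw [h]
    _ = a' * (b' * (c' * (d' * (e' * y)))) := by
        rw [mul_assoc, mul_assoc, mul_assoc, mul_assoc]


lemma Rq_shift : ∀ (k s : ℕ), 2 ≤ s → s ≤ k → k + 1 ≤ n →
    Htil m n (s:ℤ) * Rq m n k = Rq m n k * Htil m n ((s:ℤ)-1) := by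
  intro k
  induction k with
  | zero => intro s h1 h2 _; omega
  | succ k ih =>
    intro s hs hsk hkn
    rcases Nat.lt_or_ge k s with hlt | hge
    · -- base: s = k + 1
      have hk1 : s = k + 1 := by omega
      subst hk1
      obtain ⟨j, rfl⟩ : ∃ j, k = j + 1 := ⟨k - 1, by omega⟩
      have c1 : ((j + 1 + 1 : ℕ) : ℤ) = (j:ℤ) + 2 := by push_cast; ring
      rw [c1]
      simp only [Rq]
      have c2 : ((j + 1 : ℕ) : ℤ) + 1 = (j:ℤ) + 2 := by push_cast; ring
      have c2' : ((j + 1 : ℕ) : ℤ) = (j:ℤ) + 1 := by push_cast; ring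
      rw [c2]
      have c3 : (j:ℤ) + 2 - 1 = (j:ℤ) + 1 := by ring
      rw [c3]
      -- goal : Htil (j+2) * (Rq j * Htil (j+1) * Htil (j+2))
      --      = Rq j * Htil (j+1) * Htil (j+2) * Htil (j+1)
      have hcomm : Commute (Htil m n ((j:ℤ)+2)) (Rq m n j) := cHtil_Rq_far j (by omega)
      have hv1 : validIdx m n ((j:ℤ)+1) := by
        have := valid_pos (m := m) (n := n) (s := j+1) (by omega) (by omega)
        rwa [c2'] at this
      have hv2 : validIdx m n ((j:ℤ)+1+1) := by
        have := valid_pos (m := m) (n := n) (s := j+2) (by omega) (by omega)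
        have e : ((j + 2 : ℕ) : ℤ) = (j:ℤ)+1+1 := by push_cast; ring
        rwa [e] at this
      have hbr := braid_Htil hv1 hv2
      rw [show (j:ℤ)+1+1 = (j:ℤ)+2 from by ring] at hbr
      -- hbr : Htil (j+1) * Htil (j+2) * Htil (j+1) = Htil (j+2) * Htil (j+1) * Htil (j+2)
      have hbr' : Htil m n ((j:ℤ)+2) * (Htil m n ((j:ℤ)+1) * Htil m n ((j:ℤ)+2))
          = Htil m n ((j:ℤ)+1) * (Htil m n ((j:ℤ)+2) * Htil m n ((j:ℤ)+1)) := by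
        rw [← Wassoc, ← Wassoc, ← hbr]
      simp only [Wassoc]
      rw [Wcomm_pw hcomm]
      rw [hbr']
    · -- step : s ≤ k
      simp only [Rq]
      have hih := ih s hs hge (by omega)
      simp only [Wassoc]
      rw [Wpw2 hih]
      have hcomm : Htil m n ((s:ℤ)-1) * Htil m n ((k:ℤ)+1)
          = Htil m n ((k:ℤ)+1) * Htil m n ((s:ℤ)-1) := by
        exact Htil_comm (habs4 (by omega))
      rw [hcomm]

lemma Lq_shift : ∀ (k s : ℕ), 2 ≤ s → s ≤ k → k + 1 ≤ m →
    Htil m n (-(s:ℤ)) * Lq m n k = Lq m n k * Htil m n (-((s:ℤ)-1)) := by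
  intro k
  induction k with
  | zero => intro s h1 h2 _; omega
  | succ k ih =>
    intro s hs hsk hkm
    rcases Nat.lt_or_ge k s with hlt | hge
    · have hk1 : s = k + 1 := by omega
      subst hk1
      obtain ⟨j, rfl⟩ : ∃ j, k = j + 1 := ⟨k - 1, by omega⟩
      have c1 : ((j + 1 + 1 : ℕ) : ℤ) = (j:ℤ) + 2 := by push_cast; ring
      rw [c1]
      simp only [Lq]
      have c2 : ((j + 1 : ℕ) : ℤ) + 1 = (j:ℤ) + 2 := by push_cast; ring
      have c2' : ((j + 1 : ℕ) : ℤ) = (j:ℤ) + 1 := by push_cast; ring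
      rw [c2]
      have c3 : -((j:ℤ) + 2 - 1) = -((j:ℤ) + 1) := by ring
      rw [c3]
      -- goal : Htil (-(j+2)) * (Lq j * Htilinv (-(j+1)) * Htilinv (-(j+2)))
      --      = Lq j * Htilinv (-(j+1)) * Htilinv (-(j+2)) * Htil (-(j+1))
      have hcomm : Commute (Htil m n (-((j:ℤ)+2))) (Lq m n j) := cHtil_Lq_far j (by omega)
      have hv1 : validIdx m n (-((j:ℤ)+2)) := by
        have := valid_neg (m := m) (n := n) (s := j+2) (by omega) (by omega)
        have e : -((j + 2 : ℕ) : ℤ) = -((j:ℤ)+2) := by push_cast; ring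
        rwa [e] at this
      have hv2 : validIdx m n (-((j:ℤ)+2)+1) := by
        have := valid_neg (m := m) (n := n) (s := j+1) (by omega) (by omega)
        have e : -((j + 1 : ℕ) : ℤ) = -((j:ℤ)+2)+1 := by push_cast; ring
        rwa [e] at this
      have hib := ibraid hv1 hv2
      rw [show -((j:ℤ)+2)+1 = -((j:ℤ)+1) from by ring] at hib
      -- hib : Htil (-(j+2)) * (Htilinv (-(j+1)) * Htilinv (-(j+2)))
      --     = Htilinv (-(j+1)) * Htilinv (-(j+2)) * Htil (-(j+1))
      simp only [Wassoc]
      rw [Wcomm_pw hcomm]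
      rw [Wassoc] at hib
      rw [hib]
    · simp only [Lq]
      have hih := ih s hs hge (by omega)
      simp only [Wassoc]
      rw [Wpw2 hih]
      have hcomm : Htil m n (-((s:ℤ)-1)) * Htilinv m n (-((k:ℤ)+1))
          = Htilinv m n (-((k:ℤ)+1)) * Htil m n (-((s:ℤ)-1)) := by
        exact (commute_inv_left (Htil_comm (habs4 (by omega)))).symm
      rw [hcomm]

lemma Lq_split (k : ℕ) : Lq m n (k+1) = Htilinv m n (-1) * L2q m n k := by
  induction k with
  | zero =>
    simp only [Lq, L2q]
    norm_num
  | succ k ih =>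
    rw [Lq, ih, L2q]
    rw [show ((k + 1 : ℕ) : ℤ) + 1 = (k:ℤ) + 2 from by push_cast; ring]
    rw [Wassoc]

lemma Rq_split (k : ℕ) : Rq m n (k+1) = Htil m n 1 * R2q m n k := by
  induction k with
  | zero =>
    simp only [Rq, R2q]
    norm_num
  | succ k ih =>
    rw [Rq, ih, R2q]
    rw [show ((k + 1 : ℕ) : ℤ) + 1 = (k:ℤ) + 2 from by push_cast; ring]
    rw [Wassoc]

lemma E_mul_ek (k : ℕ) (hk : 1 ≤ k) :
    EB m n * ek m n k = algebraMap KK (WB m n) ((tv - tv⁻¹)/(qv - qv⁻¹)) * ek m n k := by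
  obtain ⟨k', rfl⟩ : ∃ k', k = k' + 1 := ⟨k-1, by omega⟩
  rw [ek_succ]
  simp only [Wassoc]
  rw [Wpw2 esq_eq]

lemma N_lemma : ∀ k : ℕ, k ≤ min m n → ∀ s : ℕ, 1 ≤ s → s + 1 ≤ k →
    Htil m n (-(s:ℤ)) * ek m n k = Htil m n (s:ℤ) * ek m n k := by
  intro k
  induction k with
  | zero => intro _ s _ h; omega
  | succ k ih =>
    intro hk s hs1 hsk
    rcases Nat.lt_or_ge 1 s with hs2 | hs1'
    · -- s ≥ 2
      simp only [ek_succ]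
      simp only [Wassoc]
      have hEneg : Commute (Htil m n (-(s:ℤ))) (EB m n) :=
        (commute_E_Htil (habs2 (by omega))).symm
      have hEpos : Commute (Htil m n (s:ℤ)) (EB m n) :=
        (commute_E_Htil (habs1 (by omega))).symm
      rw [Wcomm_pw hEneg, Wcomm_pw hEpos]
      have hLs := Lq_shift (m := m) (n := n) k s (by omega) (by omega) (by omega)
      rw [Wpw2 hLs]
      have hcomm : Commute (Htil m n (-((s:ℤ)-1))) (Rq m n k) := cRq_neg (by omega) k
      rw [Wcomm_pw hcomm]
      have hih := ih (by omega) (s-1) (by omega) (by omega)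
      rw [show ((s-1:ℕ):ℤ) = (s:ℤ)-1 from by omega] at hih
      rw [hih]
      have hsLq : Commute (Htil m n (s:ℤ)) (Lq m n k) := cLq_pos (by omega) k
      rw [Wcomm_pw hsLq]
      have hRs := Rq_shift (m := m) (n := n) k s (by omega) (by omega) (by omega)
      rw [Wpw2 hRs]
    · -- s = 1
      have hs : s = 1 := by omega
      subst hs
      obtain ⟨k', rfl⟩ : ∃ k', k = k' + 1 := ⟨k - 1, by omega⟩
      rw [show ((1:ℕ):ℤ) = 1 from by norm_num]
      simp only [ek_succ]
      simp only [Lq_split k', Rq_split k']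
      simp only [Wassoc]
      simp only [Wcomm_pw ((cHtil1_L2q k').symm)]
      simp only [Wcomm_pw ((cE_R2q k').symm)]
      simp only [Wcomm_pw ((cE_L2q k').symm)]
      have hv1 : validIdx m n 1 := by
        have := valid_pos (m := m) (n := n) (s := 1) (by omega) (by omega)
        rwa [Nat.cast_one] at this
      have hvm : validIdx m n (-1) := by
        have := valid_neg (m := m) (n := n) (s := 1) (by omega) (by omega)
        rwa [Nat.cast_one] at this
      have h8 := rel8_eq hv1 hvm
      rw [Wpw5 h8]

lemma Nprime (k s : ℕ) (hs : 1 ≤ s) (hsk : s + 1 ≤ k) (hk : k ≤ min m n) :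
    Htilinv m n (-(s:ℤ)) * (Htil m n (s:ℤ) * ek m n k) = ek m n k := by
  have hN := N_lemma k hk s hs hsk
  rw [← hN]
  rw [Wpw2c (Htilinv_mul (-(s:ℤ)))]
  rw [one_mul]

lemma M_lemma : ∀ j k : ℕ, j + 1 ≤ k → k ≤ min m n →
    EB m n * (Lq m n j * (Rq m n j * ek m n k))
      = algebraMap KK (WB m n) ((tv - tv⁻¹)/(qv - qv⁻¹)) * ek m n k := by
  intro j
  induction j with
  | zero =>
    intro k hk1 hk2
    simp only [Lq, Rq, one_mul]
    exact E_mul_ek k (by omega)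
  | succ j ih =>
    intro k hk1 hk2
    simp only [Lq, Rq]
    simp only [Wassoc]
    have hcomm : Commute (Htilinv m n (-((j:ℤ)+1))) (Rq m n j) :=
      cRq_neg_inv (by omega) j
    rw [Wcomm_pw hcomm]
    have hNp := Nprime k (j+1) (by omega) (by omega) hk2
    rw [show ((j+1:ℕ):ℤ) = (j:ℤ)+1 from by push_cast; ring] at hNp
    rw [hNp]
    exact ih k (by omega) hk2

lemma C_lemma : ∀ i k : ℕ, i ≤ k → k ≤ min m n →
    ek m n i * ek m n k
      = algebraMap KK (WB m n) (((tv - tv⁻¹)/(qv - qv⁻¹))^i) * ek m n k := by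
  intro i
  induction i with
  | zero =>
    intro k _ _
    have h0 : ek m n 0 = (1 : WB m n) := rfl
    rw [h0, pow_zero, map_one]
  | succ i ih =>
    intro k hik hk
    rw [ek_succ]
    simp only [Wassoc]
    rw [ih k (by omega) hk]
    simp only [Wcentral]
    rw [M_lemma i k (by omega) hk]
    have hsc : algebraMap KK (WB m n) (((tv - tv⁻¹)/(qv - qv⁻¹))^i)
        * algebraMap KK (WB m n) ((tv - tv⁻¹)/(qv - qv⁻¹))
        = algebraMap KK (WB m n) (((tv - tv⁻¹)/(qv - qv⁻¹))^(i+1)) := by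
      rw [← map_mul]
      congr 1
    rw [Wpw2c hsc]

lemma ek_suffix : ∀ i k : ℕ, i ≤ k → ∃ Q : WB m n, ek m n k = Q * ek m n i := by
  intro i k
  induction k with
  | zero =>
    intro hik
    have : i = 0 := by omega
    subst this
    exact ⟨1, by rw [one_mul]⟩
  | succ k ih =>
    intro hik
    rcases Nat.lt_or_ge k i with h | h
    · have : i = k + 1 := by omega
      subst this
      exact ⟨1, by rw [one_mul]⟩
    · obtain ⟨Q, hQ⟩ := ih h
      refine ⟨EB m n * Lq m n k * Rq m n k * Q, ?_⟩
      rw [ek_succ, hQ]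
      simp only [Wassoc]

end WBaux

/-- For `1 ≤ i ≤ k ≤ min{m,n}`, one has
`e_k e_i = e_i e_k = ((t - t⁻¹)/(q - q⁻¹))^i e_k`; in particular
`e_k² = ((t - t⁻¹)/(q - q⁻¹))^k e_k`. -/
theorem ek_mul_ei (m n : ℕ) (hm : 1 ≤ m) (hn : 1 ≤ n) (i k : ℕ)
    (hi : 1 ≤ i) (hik : i ≤ k) (hk : k ≤ min m n) :
    ek m n k * ek m n i = ek m n i * ek m n k ∧
      ek m n k * ek m n i =
        algebraMap KK (WB m n) (((tv - tv⁻¹) / (qv - qv⁻¹)) ^ i) * ek m n k ∧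
      ek m n k * ek m n k =
        algebraMap KK (WB m n) (((tv - tv⁻¹) / (qv - qv⁻¹)) ^ k) * ek m n k := by
  have hC := WBaux.C_lemma i k hik hk
  have hCk := WBaux.C_lemma k k le_rfl hk
  have hCi := WBaux.C_lemma i i le_rfl (le_trans hik hk)
  obtain ⟨Q, hQ⟩ := WBaux.ek_suffix i k hik
  have h1 : ek m n k * ek m n i
      = algebraMap KK (WB m n) (((tv - tv⁻¹) / (qv - qv⁻¹)) ^ i) * ek m n k := by
    rw [hQ]
    rw [WBaux.Wassoc]
    rw [hCi]
    rw [WBaux.Wcentral]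
  exact ⟨by rw [h1, hC], h1, hCk⟩


end
end

section
/- In B_{m,n}(q,t), for every k with 1 ≤ k ≤ min{m,n} − 1, one has e_{k+1} = ((q − q⁻¹)/(t − t⁻¹))^{k−1} · e_k H_{-k}⁻¹ H_k e_k. -/
open scoped Classical

noncomputable section

/-!
Put `δ = (t - t⁻¹)/(q - q⁻¹)`, so that `e² = δ e`. For `k ≥ 1` one proves by induction, together,
that `e_{k+1} H_{-j} = e_{k+1} H_j` for `1 ≤ j ≤ k` and that `e_k e_{k+1} = δ^k e_{k+1}`.

The first identity, with `H_{-j}⁻¹ H_j = H_j H_{-j}⁻¹`, lets `e_{k+1}` absorb every factor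
`H_{-j}⁻¹ H_j` with `j ≤ k`; this turns `e_{k+1} e_{k+2}` into
`δ e_{k+1} H_{-(k+1)}⁻¹ H_{k+1} e_{k+1}`.
Since `H_{±(k+1)}` commute with `e_k`, writing `e_{k+1} = (e H_{-1}⁻¹ ⋯ H_k) e_k` turns
`e_k e_{k+1} = δ^k e_{k+1}` into `e_{k+1} H_{-(k+1)}⁻¹ H_{k+1} e_{k+1} = δ^k e_{k+2}`, which is the
theorem. The new identity `e_{k+2} H_{-(k+1)} = e_{k+2} H_{k+1}` is relation (7) for `k = 0`; for
larger `k` it is obtained by multiplying that formula on the right by `H_{-(k+1)}` and by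
`H_{k+1}` and comparing, using the braid relations on both sides of the wall.
-/

lemma sub_inv_ne_zero_of_sq_ne_one {F : Type*} [Field F] {x : F} (hx : x ≠ 0) (hx2 : x ^ 2 ≠ 1) :
    x - x⁻¹ ≠ 0 := by
  rw [sub_ne_zero]
  intro h
  apply hx2
  rw [sq]
  nth_rewrite 2 [h]
  exact mul_inv_cancel₀ hx

lemma mul_sub_sub_eq_one {A : Type*} [Ring A] {x a b : A} (hab : a * b = 1) (ha : Commute a x)
    (h : (x - a) * (x + b) = 0) : x * (x - (a - b)) = 1 :=
  calc x * (x - (a - b)) = (x - a) * (x + b) + (a * x - x * a) + a * b := by noncomm_ring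
    _ = 1 := by rw [h, ha.eq, sub_self, hab, zero_add, zero_add]

lemma sub_sub_mul_eq_one {A : Type*} [Ring A] {x a b : A} (hab : a * b = 1) (hb : Commute b x)
    (h : (x - a) * (x + b) = 0) : (x - (a - b)) * x = 1 :=
  calc (x - (a - b)) * x = (x - a) * (x + b) + (b * x - x * b) + a * b := by noncomm_ring
    _ = 1 := by rw [h, hb.eq, sub_self, hab, zero_add, zero_add]

lemma braid_pair_mul_eq {G : Type*} [Group G] {x y u v : G} (hxu : Commute x u)
    (hyu : Commute y u) (hyv : Commute y v) (hxy : x * y * x = y * x * y)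
    (huv : u * v * u = v * u * v) :
    (x * y)⁻¹ * (v * u) * y = x * ((x * y)⁻¹ * (v * u)) ∧
      (x * y)⁻¹ * (v * u) * v = u * ((x * y)⁻¹ * (v * u)) := by
  have hy : (x * y)⁻¹ * y = x * (x * y)⁻¹ :=
    calc (x * y)⁻¹ * y = (x * y)⁻¹ * (y * x * y) * (x * y)⁻¹ := by group
      _ = x * (x * y)⁻¹ := by rw [← hxy]; group
  have hu : Commute (x * y)⁻¹ u := (hxu.mul_left hyu).inv_left
  constructor
  · rw [mul_assoc, ← (hyv.mul_right hyu).eq, ← mul_assoc, hy, mul_assoc]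
  · rw [mul_assoc, ← huv, mul_assoc u, ← mul_assoc, hu.eq, mul_assoc]

lemma mul_braid_pair_eq {M : Type*} [Monoid M] {f : M} {x y u v : Mˣ} (hxu : Commute x u)
    (hyu : Commute y u) (hyv : Commute y v) (hxy : x * y * x = y * x * y)
    (huv : u * v * u = v * u * v) (hf : f * x = f * u) :
    f * ↑((x * y)⁻¹ * (v * u) * y) = f * ↑((x * y)⁻¹ * (v * u) * v) := by
  obtain ⟨hy, hv⟩ := braid_pair_mul_eq hxu hyu hyv hxy huv
  rw [hy, hv, Units.val_mul x, Units.val_mul u, ← mul_assoc f, ← mul_assoc f, hf]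

open MvPolynomial in
lemma algebraMap_X_sub_inv_ne_zero {σ : Type*} (i : σ) :
    algebraMap (MvPolynomial σ ℚ) (FractionRing (MvPolynomial σ ℚ)) (X i) -
      (algebraMap (MvPolynomial σ ℚ) (FractionRing (MvPolynomial σ ℚ)) (X i))⁻¹ ≠ 0 := by
  have hinj := IsFractionRing.injective (MvPolynomial σ ℚ) (FractionRing (MvPolynomial σ ℚ))
  refine sub_inv_ne_zero_of_sq_ne_one ((map_ne_zero_iff _ hinj).mpr (X_ne_zero i)) ?_
  rw [← map_pow, ← map_one (algebraMap (MvPolynomial σ ℚ) (FractionRing (MvPolynomial σ ℚ))),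
    hinj.ne_iff]
  intro h
  have h2 := congrArg (eval fun _ => (2 : ℚ)) h
  norm_num at h2

lemma qv_sub_inv_ne_zero : qv - qv⁻¹ ≠ 0 := algebraMap_X_sub_inv_ne_zero 0

lemma tv_sub_inv_ne_zero : tv - tv⁻¹ ≠ 0 := algebraMap_X_sub_inv_ne_zero 1

lemma qv_ne_zero : qv ≠ 0 := fun h => qv_sub_inv_ne_zero (by simp [h])

def δ : KK := (tv - tv⁻¹) / (qv - qv⁻¹)

lemma δ_ne_zero : δ ≠ 0 := div_ne_zero tv_sub_inv_ne_zero qv_sub_inv_ne_zero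

section WalledBrauer

variable {m n : ℕ}

lemma HB_sub_mul_HB_add (i : ℤ) (h : validIdx m n i) :
    (HB m n i h - algebraMap KK _ qv) * (HB m n i h + algebraMap KK _ qv⁻¹) = 0 := by
  simpa [HB] using RingQuot.mkAlgHom_rel KK (WBrel.quad i h)

lemma algebraMap_qv_mul_inv : algebraMap KK (WB m n) qv * algebraMap KK (WB m n) qv⁻¹ = 1 := by
  rw [← map_mul, mul_inv_cancel₀ qv_ne_zero, map_one]

lemma HB_mul_HBinv (i : ℤ) (h : validIdx m n i) : HB m n i h * HBinv m n i h = 1 := by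
  rw [HBinv, map_sub]
  exact mul_sub_sub_eq_one algebraMap_qv_mul_inv (Algebra.commute_algebraMap_left _ _)
    (HB_sub_mul_HB_add i h)

lemma HBinv_mul_HB (i : ℤ) (h : validIdx m n i) : HBinv m n i h * HB m n i h = 1 := by
  rw [HBinv, map_sub]
  exact sub_sub_mul_eq_one algebraMap_qv_mul_inv (Algebra.commute_algebraMap_left _ _)
    (HB_sub_mul_HB_add i h)

lemma Htil_mul_Htilinv (i : ℤ) : Htil m n i * Htilinv m n i = 1 := by
  unfold Htil Htilinv
  split_ifs with h
  · exact HB_mul_HBinv i h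
  · exact mul_one 1

lemma Htilinv_mul_Htil (i : ℤ) : Htilinv m n i * Htil m n i = 1 := by
  unfold Htil Htilinv
  split_ifs with h
  · exact HBinv_mul_HB i h
  · exact mul_one 1

def Hu (m n : ℕ) (i : ℤ) : (WB m n)ˣ :=
  ⟨Htil m n i, Htilinv m n i, Htil_mul_Htilinv i, Htilinv_mul_Htil i⟩

@[simp] lemma val_Hu (i : ℤ) : (Hu m n i : WB m n) = Htil m n i := rfl

@[simp] lemma val_inv_Hu (i : ℤ) : ((Hu m n i)⁻¹ : (WB m n)ˣ) = Htilinv m n i := rfl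

lemma Commute.Htilinv_left {i : ℤ} {x : WB m n} (h : Commute (Htil m n i) x) :
    Commute (Htilinv m n i) x :=
  Commute.units_inv_left (u := Hu m n i) h

lemma Commute.Htilinv_right {i : ℤ} {x : WB m n} (h : Commute x (Htil m n i)) :
    Commute x (Htilinv m n i) :=
  Commute.units_inv_right (u := Hu m n i) h

lemma commute_Htil_Htil {i j : ℤ} (hij : 1 < |i - j|) : Commute (Htil m n i) (Htil m n j) := by
  unfold Htil
  split_ifs with hi hj hj
  · simpa [HB, commute_iff_eq] using RingQuot.mkAlgHom_rel KK (WBrel.comm i hi j hj hij)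
  all_goals simp

lemma commute_Htil_neg_Htil {i j : ℕ} (hi : 1 ≤ i) (hj : 1 ≤ j) :
    Commute (Htil m n (-(i : ℤ))) (Htil m n j) :=
  commute_Htil_Htil (by rw [lt_abs]; omega)

lemma commute_EB_Htil {i : ℤ} (hi : 2 ≤ |i|) : Commute (EB m n) (Htil m n i) := by
  unfold Htil
  split_ifs with h
  · exact (by simpa [HB, EB] using RingQuot.mkAlgHom_rel KK (WBrel.commE i h hi) :
      HB m n i h * EB m n = EB m n * HB m n i h).symm
  · exact Commute.one_right _

lemma Hu_braid {i j : ℤ} (hij : j = i + 1) (hi : validIdx m n i) (hj : validIdx m n j) :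
    Hu m n i * Hu m n j * Hu m n i = Hu m n j * Hu m n i * Hu m n j := by
  subst hij
  ext
  simpa [Htil, hi, hj, HB] using RingQuot.mkAlgHom_rel KK (WBrel.braid i hi hj)

lemma EB_mul_EB : EB m n * EB m n = δ • EB m n := by
  simpa [EB, δ, Algebra.smul_def] using RingQuot.mkAlgHom_rel KK (WBrel.esq (m := m) (n := n))

lemma EB_mul_Htilinv_mul_Htil_mul_EB_mul_Htil_neg_one (h1 : validIdx m n 1)
    (hm : validIdx m n (-1)) :
    EB m n * Htilinv m n (-1) * Htil m n 1 * EB m n * Htil m n (-1) =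
      EB m n * Htilinv m n (-1) * Htil m n 1 * EB m n * Htil m n 1 := by
  simpa [Htil, Htilinv, h1, hm, HB, HBinv, EB, fHinv] using
    RingQuot.mkAlgHom_rel KK (WBrel.rel7 (m := m) (n := n) h1 hm)

def negInvProd (m n k : ℕ) : WB m n :=
  ((List.range k).map (fun j => Htilinv m n (-((j + 1 : ℕ) : ℤ)))).prod

def posProd (m n k : ℕ) : WB m n :=
  ((List.range k).map (fun j => Htil m n ((j + 1 : ℕ) : ℤ))).prod

def ekStep (m n k : ℕ) : WB m n := EB m n * negInvProd m n k * posProd m n k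

lemma ek_succ (k : ℕ) : ek m n (k + 1) = ekStep m n k * ek m n k := rfl

lemma ekStep_zero : ekStep m n 0 = EB m n := by simp [ekStep, negInvProd, posProd]

lemma ek_one : ek m n 1 = EB m n := by rw [ek_succ, ekStep_zero, ek, mul_one]

lemma negInvProd_succ (k : ℕ) :
    negInvProd m n (k + 1) = negInvProd m n k * Htilinv m n (-((k + 1 : ℕ) : ℤ)) := by
  simp [negInvProd, List.range_succ]

lemma posProd_succ (k : ℕ) : posProd m n (k + 1) = posProd m n k * Htil m n ((k + 1 : ℕ) : ℤ) := by
  simp [posProd, List.range_succ]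

lemma commute_negInvProd {x : WB m n} {k : ℕ}
    (h : ∀ j : ℕ, 1 ≤ j → j ≤ k → Commute x (Htil m n (-(j : ℤ)))) :
    Commute x (negInvProd m n k) := by
  refine Commute.list_prod_right _ _ fun y hy => ?_
  obtain ⟨j, hj, rfl⟩ := List.mem_map.mp hy
  exact (h (j + 1) (by omega) (List.mem_range.mp hj)).Htilinv_right

lemma commute_posProd {x : WB m n} {k : ℕ}
    (h : ∀ j : ℕ, 1 ≤ j → j ≤ k → Commute x (Htil m n j)) :
    Commute x (posProd m n k) := by
  refine Commute.list_prod_right _ _ fun y hy => ?_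
  obtain ⟨j, hj, rfl⟩ := List.mem_map.mp hy
  exact h (j + 1) (by omega) (List.mem_range.mp hj)

lemma negInvProd_mul_posProd_succ (k : ℕ) :
    negInvProd m n (k + 1) * posProd m n (k + 1) =
      negInvProd m n k * posProd m n k *
        (Htilinv m n (-((k + 1 : ℕ) : ℤ)) * Htil m n ((k + 1 : ℕ) : ℤ)) := by
  have h : Commute (Htilinv m n (-((k + 1 : ℕ) : ℤ))) (posProd m n k) :=
    commute_posProd fun j hj _ => (commute_Htil_neg_Htil (by omega) hj).Htilinv_left
  rw [negInvProd_succ, posProd_succ]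
  simp only [mul_assoc, h.left_comm]

lemma ekStep_succ (k : ℕ) :
    ekStep m n (k + 1) =
      ekStep m n k * (Htilinv m n (-((k + 1 : ℕ) : ℤ)) * Htil m n ((k + 1 : ℕ) : ℤ)) := by
  simp only [ekStep, mul_assoc, negInvProd_mul_posProd_succ]

lemma ek_two : ek m n 2 = EB m n * Htilinv m n (-1) * Htil m n 1 * EB m n := by
  rw [ek_succ, ekStep_succ, ekStep_zero, ek_one]
  simp only [zero_add, Nat.cast_one, mul_assoc]

lemma commute_Htil_ekStep {s : ℤ} {k : ℕ} (hs : k + 2 ≤ |s|) :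
    Commute (Htil m n s) (ekStep m n k) := by
  rw [le_abs] at hs
  refine ((commute_EB_Htil (by rw [le_abs]; omega)).symm.mul_right ?_).mul_right ?_
  · exact commute_negInvProd fun j hj hjk => commute_Htil_Htil (by rw [lt_abs]; omega)
  · exact commute_posProd fun j hj hjk => commute_Htil_Htil (by rw [lt_abs]; omega)

lemma commute_Htil_ek {s : ℤ} {r : ℕ} (hs : r + 1 ≤ |s|) : Commute (Htil m n s) (ek m n r) := by
  induction r with
  | zero => exact Commute.one_right _
  | succ r ih =>
    push_cast at hs
    rw [ek_succ]
    exact (commute_Htil_ekStep (by linarith)).mul_right (ih (by linarith))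

lemma ek_mul_EB {r : ℕ} (hr : 1 ≤ r) : ek m n r * EB m n = δ • ek m n r := by
  induction r, hr using Nat.le_induction with
  | base => rw [ek_one, EB_mul_EB]
  | succ r _ ih => rw [ek_succ, mul_assoc, ih, mul_smul_comm]

lemma EB_mul_ek {r : ℕ} (hr : 1 ≤ r) : EB m n * ek m n r = δ • ek m n r := by
  obtain ⟨r, rfl⟩ := Nat.exists_eq_add_of_le' hr
  simp only [ek_succ, ekStep, mul_assoc]
  rw [← mul_assoc (EB m n) (EB m n), EB_mul_EB, smul_mul_assoc]

lemma ek_succ_mul_Htil_neg {r j : ℕ}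
    (h : ek m n r * Htil m n (-(j : ℤ)) = ek m n r * Htil m n j) :
    ek m n (r + 1) * Htil m n (-(j : ℤ)) = ek m n (r + 1) * Htil m n j := by
  rw [ek_succ, mul_assoc, h, mul_assoc]

lemma ek_mul_Htilinv_neg_mul_Htil {r j : ℕ} (hj : 1 ≤ j)
    (h : ek m n r * Htil m n (-(j : ℤ)) = ek m n r * Htil m n j) :
    ek m n r * (Htilinv m n (-(j : ℤ)) * Htil m n j) = ek m n r := by
  rw [(commute_Htil_neg_Htil hj hj).Htilinv_left.eq, ← mul_assoc, ← h, mul_assoc,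
    Htil_mul_Htilinv, mul_one]

lemma ek_mul_negInvProd_mul_posProd {r k : ℕ}
    (h : ∀ j : ℕ, 1 ≤ j → j ≤ k → ek m n r * Htil m n (-(j : ℤ)) = ek m n r * Htil m n j) :
    ek m n r * (negInvProd m n k * posProd m n k) = ek m n r := by
  induction k with
  | zero => simp [negInvProd, posProd]
  | succ k ih =>
    rw [negInvProd_mul_posProd_succ, ← mul_assoc, ih fun j hj hjk => h j hj (by omega),
      ek_mul_Htilinv_neg_mul_Htil (by omega) (h _ (by omega) le_rfl)]

lemma ek_mul_ekStep {r k : ℕ} (hr : 1 ≤ r)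
    (h : ∀ j : ℕ, 1 ≤ j → j ≤ k → ek m n r * Htil m n (-(j : ℤ)) = ek m n r * Htil m n j) :
    ek m n r * ekStep m n k = δ • ek m n r := by
  simp only [ekStep, mul_assoc]
  rw [← mul_assoc, ek_mul_EB hr, smul_mul_assoc, ek_mul_negInvProd_mul_posProd h]

lemma ek_succ_mul_Htilinv_mul_Htil_mul_ek_succ {K : ℕ}
    (h : ek m n K * ek m n (K + 1) = δ ^ K • ek m n (K + 1)) :
    ek m n (K + 1) * Htilinv m n (-((K + 1 : ℕ) : ℤ)) * Htil m n ((K + 1 : ℕ) : ℤ) *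
        ek m n (K + 1) = δ ^ K • ek m n (K + 1 + 1) := by
  have ha : Commute (ek m n K) (Htilinv m n (-((K + 1 : ℕ) : ℤ))) :=
    (commute_Htil_ek (by rw [le_abs]; omega)).Htilinv_left.symm
  have hb : Commute (ek m n K) (Htil m n ((K + 1 : ℕ) : ℤ)) :=
    (commute_Htil_ek (by rw [le_abs]; omega)).symm
  nth_rewrite 1 [ek_succ]
  rw [ek_succ (K + 1), ekStep_succ]
  simp only [mul_assoc]
  rw [ha.left_comm, hb.left_comm, h, mul_smul_comm, mul_smul_comm, mul_smul_comm]

lemma ek_mul_ek_succ_succ {K : ℕ}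
    (habs : ∀ j : ℕ, 1 ≤ j → j ≤ K →
      ek m n (K + 1) * Htil m n (-(j : ℤ)) = ek m n (K + 1) * Htil m n j)
    (hM : ek m n (K + 1) * Htilinv m n (-((K + 1 : ℕ) : ℤ)) * Htil m n ((K + 1 : ℕ) : ℤ) *
        ek m n (K + 1) = δ ^ K • ek m n (K + 1 + 1)) :
    ek m n (K + 1) * ek m n (K + 1 + 1) = δ ^ (K + 1) • ek m n (K + 1 + 1) := by
  calc ek m n (K + 1) * ek m n (K + 1 + 1)
      = ek m n (K + 1) * ekStep m n K *
          (Htilinv m n (-((K + 1 : ℕ) : ℤ)) * Htil m n ((K + 1 : ℕ) : ℤ)) * ek m n (K + 1) := by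
        rw [ek_succ (K + 1), ekStep_succ]
        simp only [mul_assoc]
    _ = δ ^ (K + 1) • ek m n (K + 1 + 1) := by
        rw [ek_mul_ekStep (by omega) habs, smul_mul_assoc, smul_mul_assoc, ← mul_assoc, hM,
          smul_smul, pow_succ']

lemma ek_succ_succ_mul_Htilinv_mul_Htil_mul_ek_succ_succ_mul {J : ℕ}
    (habs : ∀ j : ℕ, 1 ≤ j → j ≤ J →
      ek m n (J + 1 + 1) * Htil m n (-(j : ℤ)) = ek m n (J + 1 + 1) * Htil m n j)
    {w : (WB m n)ˣ} (hw : Commute (w : WB m n) (ek m n (J + 1))) :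
    ek m n (J + 1 + 1) * Htilinv m n (-((J + 1 + 1 : ℕ) : ℤ)) * Htil m n ((J + 1 + 1 : ℕ) : ℤ) *
        ek m n (J + 1 + 1) * w =
      δ • (ek m n (J + 1 + 1) *
        ↑((Hu m n (-((J + 1 : ℕ) : ℤ)) * Hu m n (-((J + 1 + 1 : ℕ) : ℤ)))⁻¹ *
          (Hu m n ((J + 1 + 1 : ℕ) : ℤ) * Hu m n ((J + 1 : ℕ) : ℤ)) * w) * ek m n (J + 1)) := by
  have hy : Commute (Htilinv m n (-((J + 1 + 1 : ℕ) : ℤ))) (ekStep m n J) :=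
    (commute_Htil_ekStep (by rw [le_abs]; omega)).Htilinv_left
  have hv : Commute (Htil m n ((J + 1 + 1 : ℕ) : ℤ)) (ekStep m n J) :=
    commute_Htil_ekStep (by rw [le_abs]; omega)
  have hvx : Commute (Htil m n ((J + 1 + 1 : ℕ) : ℤ)) (Htilinv m n (-((J + 1 : ℕ) : ℤ))) :=
    (commute_Htil_neg_Htil (by omega) (by omega)).symm.Htilinv_right
  nth_rewrite 2 [ek_succ]
  rw [ekStep_succ]
  simp only [mul_assoc, Units.val_mul, mul_inv_rev, val_Hu, val_inv_Hu]
  rw [hv.left_comm, hy.left_comm, ← mul_assoc (ek m n (J + 1 + 1)), ek_mul_ekStep (by omega) habs,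
    smul_mul_assoc, hvx.left_comm, ← hw.eq]

lemma ek_succ_succ_mul_Htil_neg {K : ℕ} (hK : 1 ≤ K) (hKmn : K + 2 ≤ min m n)
    (habs : ∀ j : ℕ, 1 ≤ j → j ≤ K →
      ek m n (K + 1) * Htil m n (-(j : ℤ)) = ek m n (K + 1) * Htil m n j)
    (hM : ek m n (K + 1) * Htilinv m n (-((K + 1 : ℕ) : ℤ)) * Htil m n ((K + 1 : ℕ) : ℤ) *
        ek m n (K + 1) = δ ^ K • ek m n (K + 1 + 1)) :
    ek m n (K + 1 + 1) * Htil m n (-((K + 1 : ℕ) : ℤ)) =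
      ek m n (K + 1 + 1) * Htil m n ((K + 1 : ℕ) : ℤ) := by
  obtain ⟨J, rfl⟩ := Nat.exists_eq_add_of_le' hK
  set x := Hu m n (-((J + 1 : ℕ) : ℤ))
  set y := Hu m n (-((J + 1 + 1 : ℕ) : ℤ))
  set u := Hu m n ((J + 1 : ℕ) : ℤ)
  set v := Hu m n ((J + 1 + 1 : ℕ) : ℤ)
  have hxu : Commute x u := Units.ext (commute_Htil_neg_Htil (by omega) (by omega)).eq
  have hyu : Commute y u := Units.ext (commute_Htil_neg_Htil (by omega) (by omega)).eq
  have hyv : Commute y v := Units.ext (commute_Htil_neg_Htil (by omega) (by omega)).eq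
  have hxy : x * y * x = y * x * y :=
    (Hu_braid (by push_cast; ring) (by unfold validIdx; omega) (by unfold validIdx; omega)).symm
  have huv : u * v * u = v * u * v :=
    Hu_braid (by push_cast; ring) (by unfold validIdx; omega) (by unfold validIdx; omega)
  have hf : ek m n (J + 1 + 1) * x = ek m n (J + 1 + 1) * u := habs (J + 1) (by omega) le_rfl
  have habs' : ∀ j : ℕ, 1 ≤ j → j ≤ J → _ := fun j hj hjJ => habs j hj (by omega)
  apply smul_right_injective (WB m n) (pow_ne_zero (J + 1) δ_ne_zero)
  dsimp only
  rw [← smul_mul_assoc, ← smul_mul_assoc, ← hM]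
  change _ * (y : WB m n) = _ * (v : WB m n)
  rw [ek_succ_succ_mul_Htilinv_mul_Htil_mul_ek_succ_succ_mul habs'
      (commute_Htil_ek (by rw [le_abs]; omega)),
    ek_succ_succ_mul_Htilinv_mul_Htil_mul_ek_succ_succ_mul habs'
      (commute_Htil_ek (by rw [le_abs]; omega)),
    mul_braid_pair_eq hxu hyu hyv hxy huv hf]

lemma ek_succ_mul_Htil_neg_and_ek_mul_ek_succ {K : ℕ} (hK : 1 ≤ K) (hKmn : K + 1 ≤ min m n) :
    (∀ j : ℕ, 1 ≤ j → j ≤ K →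
      ek m n (K + 1) * Htil m n (-(j : ℤ)) = ek m n (K + 1) * Htil m n j) ∧
      ek m n K * ek m n (K + 1) = δ ^ K • ek m n (K + 1) := by
  induction K, hK using Nat.le_induction with
  | base =>
    refine ⟨fun j hj1 hj => ?_, by rw [ek_one, pow_one, EB_mul_ek (by omega)]⟩
    obtain rfl : j = 1 := by omega
    rw [Nat.cast_one, ek_two]
    exact EB_mul_Htilinv_mul_Htil_mul_EB_mul_Htil_neg_one (by unfold validIdx; omega)
      (by unfold validIdx; omega)
  | succ K hK ih =>
    obtain ⟨habs, hmul⟩ := ih (by omega)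
    have hM := ek_succ_mul_Htilinv_mul_Htil_mul_ek_succ hmul
    refine ⟨fun j hj1 hj => ?_, ek_mul_ek_succ_succ habs hM⟩
    rcases (show j ≤ K ∨ j = K + 1 by omega) with hj | rfl
    · exact ek_succ_mul_Htil_neg (habs j hj1 hj)
    · exact ek_succ_succ_mul_Htil_neg hK hKmn habs hM

lemma ek_mul_ek_succ {K : ℕ} (hKmn : K + 1 ≤ min m n) :
    ek m n K * ek m n (K + 1) = δ ^ K • ek m n (K + 1) := by
  rcases K with _ | K
  · rw [ek, one_mul, pow_zero, one_smul]
  · exact (ek_succ_mul_Htil_neg_and_ek_mul_ek_succ (by omega) hKmn).2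

end WalledBrauer

theorem ek_succ_via_ek_general (m n : ℕ) (k : ℕ)
    (hk1 : 1 ≤ k) (hk : k + 1 ≤ min m n) :
    ek m n (k + 1) =
      algebraMap KK (WB m n) (((qv - qv⁻¹) / (tv - tv⁻¹)) ^ (k - 1)) *
        (ek m n k * Htilinv m n (-(k : ℤ)) * Htil m n (k : ℤ) * ek m n k) := by
  obtain ⟨K, rfl⟩ := Nat.exists_eq_add_of_le' hk1
  rw [ek_succ_mul_Htilinv_mul_Htil_mul_ek_succ (ek_mul_ek_succ (by omega)), ← Algebra.smul_def,
    smul_smul, Nat.add_sub_cancel, ← inv_div, ← mul_pow, ← δ, inv_mul_cancel₀ δ_ne_zero, one_pow,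
    one_smul]

/-- For `1 ≤ k ≤ min{m,n} - 1`, one has
`e_{k+1} = ((q - q⁻¹)/(t - t⁻¹))^{k-1} ⬝ e_k H_{-k}⁻¹ H_k e_k`. -/
theorem ek_succ_via_ek (m n : ℕ) (hm : 1 ≤ m) (hn : 1 ≤ n) (k : ℕ)
    (hk1 : 1 ≤ k) (hk : k + 1 ≤ min m n) :
    ek m n (k + 1) =
      algebraMap KK (WB m n) (((qv - qv⁻¹) / (tv - tv⁻¹)) ^ (k - 1)) *
        (ek m n k * Htilinv m n (-(k : ℤ)) * Htil m n (k : ℤ) * ek m n k) :=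
  ek_succ_via_ek_general m n k hk1 hk

end
end
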